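/- A permutation π of {1,...,n} avoids the pattern 312 if and only if the monotone triangle corresponding to π is gapless. -/

import Mathlib

/-- `a` is the monotone triangle corresponding to the permutation `π` of `{1, …, n}`:
for each `1 ≤ i ≤ n`, the `i`-th row `(a i 1, …, a i i)` is strictly increasing and
is a rearrangement of `{π 1, …, π i}`. -/
def PermTriangle (n : ℕ) (π : ℕ → ℕ) (a : ℕ → ℕ → ℕ) : Prop :=
  ∀ i, 1 ≤ i → i ≤ n →
    (∀ j j', 1 ≤ j → j < j' → j' ≤ i → a i j < a i j') ∧
    {x | ∃ j, 1 ≤ j ∧ j ≤ i ∧ a i j = x} = {x | ∃ j, 1 ≤ j ∧ j ≤ i ∧ π j = x}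

/-!
Write `P i = {π 1, …, π i}`. Row `i` lists `P i` in increasing order, so
`a i c ≤ w ↔ c ≤ #{x ∈ P i | x ≤ w}`, and `P (i+1) = insert (π (i+1)) (P i)`.

A gap `a (i+1) c + 1 < a i c` between rows `i` and `i+1` happens exactly when some value `w`
skipped by `P (i+1)` lies above the new value `π (i+1)` but below some value `π m`, `m ≤ i`,
already present. As `π` is a permutation, `w = π k` with `k > i + 1`, so `(m, i+1, k)` is an
occurrence of 312; conversely every occurrence `(m, j, k)` of 312 produces a gap between
rows `j - 1` and `j`, at the rank of `π k` in `P j`.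
-/

open Finset

section Counting

variable {S : Finset ℕ} {v w : ℕ}

lemma card_filter_le_insert_le :
    #{x ∈ insert v S | x ≤ w} ≤ #{x ∈ S | x ≤ w} + 1 := by
  rw [filter_insert]
  split_ifs
  · exact card_insert_le _ _
  · exact Nat.le_succ _

lemma card_filter_le_insert_of_lt (h : w < v) :
    #{x ∈ insert v S | x ≤ w} = #{x ∈ S | x ≤ w} := by
  rw [filter_insert, if_neg (Nat.not_le.mpr h)]

lemma card_filter_le_insert_of_le_of_notMem (h : v ≤ w) (hv : v ∉ S) :
    #{x ∈ insert v S | x ≤ w} = #{x ∈ S | x ≤ w} + 1 := by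
  rw [filter_insert, if_pos h, card_insert_of_notMem (fun hm => hv (mem_filter.mp hm).1)]

lemma card_filter_le_mono {u : ℕ} (h : u ≤ w) : #{x ∈ S | x ≤ u} ≤ #{x ∈ S | x ≤ w} :=
  card_le_card (monotone_filter_right S fun _ _ hx => hx.trans h)

lemma card_filter_le_lt_of_succ_mem (hw : w + 1 ∈ S) :
    #{x ∈ S | x ≤ w} < #{x ∈ S | x ≤ w + 1} := by
  refine card_lt_card ⟨monotone_filter_right S fun _ _ hx => hx.trans w.le_succ, ?_⟩
  intro hsub
  simpa using (mem_filter.mp (hsub (mem_filter.mpr ⟨hw, le_rfl⟩))).2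

lemma card_filter_le_lt_card (h : ∃ x ∈ S, w < x) : #{x ∈ S | x ≤ w} < #S :=
  card_lt_card (filter_ssubset.mpr (by simpa using h))

end Counting

lemma StrictMonoOn.le_iff_le_card_filter_image {b : ℕ → ℕ} {i c : ℕ}
    (hb : StrictMonoOn b (Set.Icc 1 i)) (hc : c ∈ Icc 1 i) (w : ℕ) :
    b c ≤ w ↔ c ≤ #{x ∈ (Icc 1 i).image b | x ≤ w} := by
  have hinj : Set.InjOn b ↑{j ∈ Icc 1 i | b j ≤ w} :=
    hb.injOn.mono (by rw [← coe_Icc]; exact coe_subset.mpr (filter_subset _ _))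
  rw [filter_image, card_image_of_injOn hinj]
  obtain ⟨hc1, hci⟩ := mem_Icc.mp hc
  constructor
  · intro h
    calc c = #(Icc 1 c) := by simp
      _ ≤ _ := card_le_card fun j hj => by
        obtain ⟨hj1, hjc⟩ := mem_Icc.mp hj
        refine mem_filter.mpr ⟨mem_Icc.mpr ⟨hj1, hjc.trans hci⟩, le_trans ?_ h⟩
        exact hb.monotoneOn ⟨hj1, hjc.trans hci⟩ ⟨hc1, hci⟩ hjc
  · intro h
    by_contra! hw
    have hsub : {j ∈ Icc 1 i | b j ≤ w} ⊆ Icc 1 (c - 1) := fun j hj => by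
      obtain ⟨hj, hjw⟩ := mem_filter.mp hj
      obtain ⟨hj1, hji⟩ := mem_Icc.mp hj
      refine mem_Icc.mpr ⟨hj1, Nat.le_sub_one_of_lt (lt_of_not_ge fun hcj => ?_)⟩
      exact (hw.trans_le (hb.monotoneOn ⟨hc1, hci⟩ ⟨hj1, hji⟩ hcj)).not_ge hjw
    have := card_le_card hsub
    simp only [Nat.card_Icc] at this
    omega

def prefixValues (π : ℕ → ℕ) (i : ℕ) : Finset ℕ :=
  (Icc 1 i).image π

lemma prefixValues_succ (π : ℕ → ℕ) (i : ℕ) :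
    prefixValues π (i + 1) = insert (π (i + 1)) (prefixValues π i) := by
  rw [prefixValues, prefixValues, ← image_insert,
    insert_Icc_right_eq_Icc_add_one (Nat.le_add_left 1 i)]

lemma card_prefixValues_le (π : ℕ → ℕ) (i : ℕ) : #(prefixValues π i) ≤ i :=
  card_image_le.trans (by simp)

lemma Set.InjOn.notMem_prefixValues {n : ℕ} {π : ℕ → ℕ} (hπ : Set.InjOn π (Set.Icc 1 n))
    {i k : ℕ} (hik : i < k) (hkn : k ≤ n) : π k ∉ prefixValues π i := fun hmem => by
  obtain ⟨j, hj, hjk⟩ := Finset.mem_image.mp hmem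
  obtain ⟨hj1, hji⟩ := Finset.mem_Icc.mp hj
  have := hπ ⟨hj1, by omega⟩ ⟨by omega, hkn⟩ hjk
  omega

namespace PermTriangle

variable {n : ℕ} {π : ℕ → ℕ} {a : ℕ → ℕ → ℕ} {i c w : ℕ}

lemma strictMonoOn_row (ha : PermTriangle n π a) (hi : 1 ≤ i) (hin : i ≤ n) :
    StrictMonoOn (a i) (Set.Icc 1 i) :=
  fun j hj j' hj' hjj' => (ha i hi hin).1 j j' hj.1 hjj' hj'.2

lemma image_row (ha : PermTriangle n π a) (hi : 1 ≤ i) (hin : i ≤ n) :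
    (Icc 1 i).image (a i) = prefixValues π i := by
  have hrow := (ha i hi hin).2
  ext x
  have hx := Set.ext_iff.mp hrow x
  simp only [Set.mem_ofPred_eq] at hx
  simpa [prefixValues, and_assoc] using hx

lemma mem_prefixValues (ha : PermTriangle n π a) (hin : i ≤ n) (hc : c ∈ Icc 1 i) :
    a i c ∈ prefixValues π i :=
  ha.image_row ((mem_Icc.mp hc).1.trans (mem_Icc.mp hc).2) hin ▸ mem_image_of_mem _ hc

lemma le_iff (ha : PermTriangle n π a) (hin : i ≤ n) (hc : c ∈ Icc 1 i) :
    a i c ≤ w ↔ c ≤ #{x ∈ prefixValues π i | x ≤ w} := by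
  have hi : 1 ≤ i := (mem_Icc.mp hc).1.trans (mem_Icc.mp hc).2
  rw [← ha.image_row hi hin]
  exact (ha.strictMonoOn_row hi hin).le_iff_le_card_filter_image hc w

lemma exists_pattern_of_gap (hmaps : Set.MapsTo π (Set.Icc 1 n) (Set.Icc 1 n))
    (hsurj : Set.SurjOn π (Set.Icc 1 n) (Set.Icc 1 n)) (ha : PermTriangle n π a)
    (hin : i + 1 ≤ n) (hc : c ∈ Icc 1 i) (hgap : a (i + 1) c + 1 < a i c) :
    ∃ m k, 1 ≤ m ∧ m ≤ i ∧ i + 1 < k ∧ k ≤ n ∧ π (i + 1) < π k ∧ π k < π m := by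
  obtain ⟨hc1, hci⟩ := mem_Icc.mp hc
  set w := a (i + 1) c
  have hnext : c ≤ #{x ∈ prefixValues π (i + 1) | x ≤ w} :=
    (ha.le_iff hin (mem_Icc.mpr ⟨hc1, by omega⟩)).mp le_rfl
  have hprev : #{x ∈ prefixValues π i | x ≤ w + 1} < c :=
    lt_of_not_ge fun h => by have := (ha.le_iff (by omega) hc).mpr h; omega
  have hstep := card_filter_le_insert_le (S := prefixValues π i) (v := π (i + 1)) (w := w + 1)
  rw [← prefixValues_succ] at hstep
  -- `w + 1` is skipped: otherwise the count in row `i + 1` would jump past `c` at `w + 1`.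
  have hskip : w + 1 ∉ prefixValues π (i + 1) := fun hmem => by
    have := card_filter_le_lt_of_succ_mem hmem
    omega
  have hnew : π (i + 1) < w + 1 := by
    by_contra! hle
    have hmem : π (i + 1) ∈ prefixValues π (i + 1) :=
      prefixValues_succ π i ▸ mem_insert_self _ _
    have hlt : w + 1 < π (i + 1) := lt_of_le_of_ne hle fun heq => hskip (heq ▸ hmem)
    have hunchanged := card_filter_le_insert_of_lt (S := prefixValues π i) hlt
    rw [← prefixValues_succ] at hunchanged
    have := card_filter_le_mono (S := prefixValues π (i + 1)) (Nat.le_add_right w 1)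
    omega
  obtain ⟨m, hm, hmc⟩ := mem_image.mp (ha.mem_prefixValues (by omega) hc)
  obtain ⟨hm1, hmi⟩ := mem_Icc.mp hm
  have hwn : w + 1 ∈ Set.Icc 1 n :=
    ⟨by omega, by have := (hmaps ⟨hm1, hmi.trans (by omega)⟩).2; omega⟩
  obtain ⟨k, ⟨hk1, hkn⟩, hkw⟩ := hsurj hwn
  have hik : i + 1 < k := lt_of_not_ge fun hki =>
    hskip (hkw ▸ mem_image_of_mem π (mem_Icc.mpr ⟨hk1, hki⟩))
  exact ⟨m, k, hm1, hmi, hik, hkn, hkw ▸ hnew, by omega⟩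

lemma gap_of_pattern (hinj : Set.InjOn π (Set.Icc 1 n)) (ha : PermTriangle n π a) {m k : ℕ}
    (hm : m ∈ Icc 1 i) (hik : i + 1 < k) (hkn : k ≤ n) (hjk : π (i + 1) < π k)
    (hkm : π k < π m) :
    ∃ c ∈ Icc 1 i, a (i + 1) c + 1 < a i c := by
  set w := π k
  set c := #{x ∈ prefixValues π i | x ≤ w} + 1
  have hc : c ∈ Icc 1 i := mem_Icc.mpr ⟨Nat.le_add_left 1 _,
    (card_filter_le_lt_card ⟨π m, mem_image_of_mem π hm, hkm⟩).trans_le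
      (card_prefixValues_le π i)⟩
  have hprev : w < a i c := lt_of_not_ge fun h => by
    have := (ha.le_iff (by omega) hc).mp h
    omega
  have hc' : c ∈ Icc 1 (i + 1) := Icc_subset_Icc_right (Nat.le_succ i) hc
  have hnext : a (i + 1) c ≤ w := by
    refine (ha.le_iff (by omega) hc').mpr ?_
    rw [prefixValues_succ, card_filter_le_insert_of_le_of_notMem hjk.le
      (hinj.notMem_prefixValues (by omega) (by omega))]
  have hne : a (i + 1) c ≠ w := fun heq => by
    have hmem := ha.mem_prefixValues (by omega) hc'
    rw [heq] at hmem
    exact hinj.notMem_prefixValues hik hkn hmem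
  exact ⟨c, hc, by omega⟩

end PermTriangle

/-- A permutation `π` of `{1, …, n}` avoids the pattern 312 (there are no
`1 ≤ i < j < k ≤ n` with `π i > π k > π j`) iff its monotone triangle is gapless
(no `i, j` with `a i j - a (i+1) j > 1`). -/
theorem avoids312_iff_gapless (n : ℕ) (π : ℕ → ℕ)
    (hπ : Set.BijOn π (Set.Icc 1 n) (Set.Icc 1 n))
    (a : ℕ → ℕ → ℕ) (ha : PermTriangle n π a) :
    (¬ ∃ i j k, 1 ≤ i ∧ i < j ∧ j < k ∧ k ≤ n ∧ π j < π k ∧ π k < π i) ↔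
    (∀ i j, 1 ≤ j → j ≤ i → i + 1 ≤ n → a i j ≤ a (i + 1) j + 1) := by
  constructor
  · intro havoid i c hc1 hci hin
    by_contra! hgap
    obtain ⟨m, k, hm1, hmi, hik, hkn, hjk, hkm⟩ :=
      ha.exists_pattern_of_gap hπ.mapsTo hπ.surjOn hin (mem_Icc.mpr ⟨hc1, hci⟩) hgap
    exact havoid ⟨m, i + 1, k, hm1, by omega, hik, hkn, hjk, hkm⟩
  · rintro hgapless ⟨m, j, k, hm1, hmj, hjk, hkn, hπjk, hπkm⟩
    obtain ⟨i, rfl⟩ : ∃ i, j = i + 1 := ⟨j - 1, by omega⟩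
    obtain ⟨c, hc, hgap⟩ :=
      ha.gap_of_pattern hπ.injOn (mem_Icc.mpr ⟨hm1, by omega⟩) hjk hkn hπjk hπkm
    exact (hgapless i c (mem_Icc.mp hc).1 (mem_Icc.mp hc).2 (by omega)).not_gt hgap
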